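/- Fix n ≥ 1 and let Q(λ) = A_n λⁿ + ⋯ + A_1 λ + A_0 be a random real polynomial whose n+1 coefficients A_0, …, A_n are i.i.d. standard normal random variables. Then P(N⁻(Q) is odd) = 1/2, and consequently P(N⁻(Q) is even) = 1/2. -/

import Mathlib

open Polynomial MeasureTheory ProbabilityTheory

/-- The number of complex roots, counted with multiplicity, of a real polynomial
that have negative real part. -/
noncomputable def negRootCount (q : Polynomial ℝ) : ℕ :=
  Multiset.card ((q.map (algebraMap ℝ ℂ)).roots.filter fun z => z.re < 0)

/-- The random real polynomial `∑_{i=0}^{n} ω_i λ^i` built from coefficients `ω`. -/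
noncomputable def polyOfCoeffs {n : ℕ} (ω : Fin (n + 1) → ℝ) : Polynomial ℝ :=
  ∑ i : Fin (n + 1), Polynomial.C (ω i) * Polynomial.X ^ (i : ℕ)

/-! Over `ℂ` the roots of a real polynomial `q` are stable under conjugation, so their product
is `(-1) ^ N⁻(q)` times a positive real: a conjugate pair contributes `|z|²`, a real root its
sign. By Vieta, `q(0) = (-1) ^ n a_n ∏ z`, hence `N⁻(q)` is even iff `(-1) ^ n a_0 a_n > 0`.
Flipping the sign of `A_0` preserves the Gaussian law and exchanges the events
`(-1) ^ n A_0 A_n > 0` and `(-1) ^ n A_0 A_n < 0`, which together have probability one. -/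

theorem even_iff_pos_of_eq_neg_one_pow_mul {R : Type*} [Ring R] [PartialOrder R]
    [IsOrderedAddMonoid R] {k : ℕ} {x w : R} (hw : 0 < w) (hx : x = (-1) ^ k * w) :
    Even k ↔ 0 < x := by
  rcases k.even_or_odd with hk | hk
  · simpa [hk, hk.neg_one_pow, hx] using hw
  · simpa [Nat.not_even_iff_odd.mpr hk, hk.neg_one_pow, hx] using hw.asymm

section ComplexOrder

open scoped ComplexOrder ComplexConjugate

namespace Multiset

noncomputable def negReCount (S : Multiset ℂ) : ℕ := card (S.filter fun z => z.re < 0)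

theorem negReCount_add (S T : Multiset ℂ) :
    negReCount (S + T) = negReCount S + negReCount T := by
  simp [negReCount, filter_add]

theorem neg_one_pow_negReCount_mul_prod_pos {S : Multiset ℂ} (hS : S.map conj = S)
    (h0 : (0 : ℂ) ∉ S) : 0 < (-1) ^ negReCount S * S.prod := by
  induction S using strongInductionOn with
  | ih S ih =>
  obtain rfl | ⟨a, ha⟩ := empty_or_exists_mem S
  · simp [negReCount]
  have ha0 : a ≠ 0 := ne_of_mem_of_not_mem ha h0
  -- peel off either a real element or a conjugate pair
  suffices ∃ T ≤ S, T ≠ 0 ∧ T.map conj = T ∧ 0 < (-1) ^ negReCount T * T.prod by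
    obtain ⟨T, hTS, hT0, hTconj, hT⟩ := this
    obtain ⟨U, rfl⟩ := le_iff_exists_add.mp hTS
    have hU : 0 < (-1) ^ negReCount U * U.prod := by
      refine ih U (lt_add_of_pos_left U (pos_iff_ne_zero.mpr hT0)) ?_
        fun hU => h0 (mem_add.mpr (Or.inr hU))
      simpa [map_add, hTconj] using hS
    rw [negReCount_add, prod_add, pow_add]
    convert mul_pos hT hU using 1
    ring
  by_cases him : a.im = 0
  · refine ⟨{a}, singleton_le.mpr ha, singleton_ne_zero a,
      by simp [Complex.conj_eq_iff_im.mpr him], ?_⟩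
    obtain ⟨r, rfl⟩ : ∃ r : ℝ, a = r := ⟨a.re, Complex.ext rfl (by simpa using him)⟩
    have hr : r ≠ 0 := by exact_mod_cast ha0
    rcases hr.lt_or_gt with hr | hr
    · simpa [negReCount, filter_singleton, hr] using Complex.zero_lt_real.mpr (neg_pos.mpr hr)
    · simpa [negReCount, filter_singleton, hr.not_gt] using hr
  · have hca : conj a ∈ S.erase a := by
      rw [mem_erase_of_ne (mt Complex.conj_eq_iff_im.mp him), ← hS]
      exact mem_map_of_mem _ ha
    refine ⟨{a, conj a}, ?_, by simp, by simpa using pair_comm _ _, ?_⟩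
    · rw [insert_eq_cons]
      exact (cons_le_cons a (singleton_le.mpr hca)).trans (cons_erase ha).le
    · have : 0 < ((Complex.normSq a : ℝ) : ℂ) :=
        Complex.zero_lt_real.mpr (Complex.normSq_pos.mpr ha0)
      by_cases hre : a.re < 0 <;>
        simpa [negReCount, filter_singleton, filter_cons, hre, Complex.mul_conj] using this

end Multiset

theorem Polynomial.map_conj_aroots (q : ℝ[X]) : (q.aroots ℂ).map conj = q.aroots ℂ := by
  have hsplit : (q.map (algebraMap ℝ ℂ)).Splits := IsAlgClosed.splits _
  rw [aroots, ← hsplit.roots_map_of_injective (starRingEnd ℂ).injective, map_map]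
  congr 2
  ext r
  simp

theorem negRootCount_eq_negReCount_aroots (q : ℝ[X]) :
    negRootCount q = (q.aroots ℂ).negReCount :=
  rfl

theorem even_negRootCount_iff {q : ℝ[X]} (h0 : q.coeff 0 ≠ 0) :
    Even (negRootCount q) ↔ 0 < (-1) ^ q.natDegree * q.coeff 0 * q.leadingCoeff := by
  have hsplit : (q.map (algebraMap ℝ ℂ)).Splits := IsAlgClosed.splits _
  have hvieta := hsplit.coeff_zero_eq_leadingCoeff_mul_prod_roots
  rw [coeff_map, natDegree_map, leadingCoeff_map] at hvieta
  have hroot0 : (0 : ℂ) ∉ q.aroots ℂ := by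
    intro h
    have := (mem_aroots.mp h).2
    rw [← coeff_zero_eq_aeval_zero', map_eq_zero_iff _ (algebraMap ℝ ℂ).injective] at this
    exact h0 this
  have hpos := Multiset.neg_one_pow_negReCount_mul_prod_pos q.map_conj_aroots hroot0
  rw [negRootCount_eq_negReCount_aroots, ← Complex.zero_lt_real]
  set k := (q.aroots ℂ).negReCount
  have hlead : q.leadingCoeff ≠ 0 := leadingCoeff_ne_zero.mpr (by rintro rfl; simp at h0)
  have hlead2 : (0 : ℂ) < ((q.leadingCoeff ^ 2 : ℝ) : ℂ) :=
    Complex.zero_lt_real.mpr (by positivity)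
  refine even_iff_pos_of_eq_neg_one_pow_mul (mul_pos hlead2 hpos) ?_
  have hn : ((-1 : ℂ) ^ q.natDegree) ^ 2 = 1 := by rw [pow_right_comm, neg_one_sq, one_pow]
  have hk : ((-1 : ℂ) ^ k) ^ 2 = 1 := by rw [pow_right_comm, neg_one_sq, one_pow]
  push_cast
  linear_combination (-1) ^ q.natDegree * (q.leadingCoeff : ℂ) * hvieta
    + (q.leadingCoeff : ℂ) ^ 2 * (q.aroots ℂ).prod * (hn - hk)

end ComplexOrder

theorem coeff_polyOfCoeffs {n : ℕ} (ω : Fin (n + 1) → ℝ) (k : ℕ) :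
    (polyOfCoeffs ω).coeff k = if h : k < n + 1 then ω ⟨k, h⟩ else 0 := by
  simp only [polyOfCoeffs, finsetSum_coeff, coeff_C_mul_X_pow]
  split_ifs with h
  · rw [Finset.sum_eq_single ⟨k, h⟩ (fun i _ hi => if_neg fun hk => hi (Fin.ext hk.symm))
      (by simp)]
    simp
  · exact Finset.sum_eq_zero fun i _ => if_neg fun (hk : k = i) => h (hk ▸ i.isLt)

theorem natDegree_polyOfCoeffs {n : ℕ} {ω : Fin (n + 1) → ℝ} (hω : ω (Fin.last n) ≠ 0) :
    (polyOfCoeffs ω).natDegree = n := by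
  refine natDegree_eq_of_le_of_coeff_ne_zero ?_ (by simpa [coeff_polyOfCoeffs])
  exact natDegree_le_iff_coeff_eq_zero.mpr fun k hk => by
    simp [coeff_polyOfCoeffs, show ¬ k < n + 1 by omega]

theorem measurePreserving_update_neg {ι : Type*} [Fintype ι] [DecidableEq ι] {ν : Measure ℝ}
    [SigmaFinite ν] (hν : ν.map Neg.neg = ν) (i : ι) :
    MeasurePreserving (fun ω : ι → ℝ => Function.update ω i (-ω i))
      (Measure.pi fun _ => ν) (Measure.pi fun _ => ν) := by
  convert measurePreserving_pi (fun _ => ν) (fun _ => ν)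
    (f := fun j => if j = i then Neg.neg else id) fun j => ?_ using 1
  · ext ω j
    by_cases hj : j = i <;> simp [hj]
  · split_ifs
    · exact ⟨measurable_neg, hν⟩
    · exact .id ν

theorem measure_neg_eq_half_and_measure_pos_eq_half {α : Type*} [MeasurableSpace α]
    {μ : Measure α} [IsProbabilityMeasure μ] {T : α → α} (hT : MeasurePreserving T μ μ)
    {f : α → ℝ} (hf : Measurable f) (hfT : ∀ x, f (T x) = -f x) (hf0 : ∀ᵐ x ∂μ, f x ≠ 0) :
    μ {x | f x < 0} = 1 / 2 ∧ μ {x | 0 < f x} = 1 / 2 := by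
  have hneg : MeasurableSet {x | f x < 0} := measurableSet_lt hf measurable_const
  have hpos : MeasurableSet {x | 0 < f x} := measurableSet_lt measurable_const hf
  have hswap : μ {x | 0 < f x} = μ {x | f x < 0} := by
    rw [← hT.measure_preimage hneg.nullMeasurableSet]
    simp [Set.preimage, hfT]
  have hcover : μ ({x | f x < 0} ∪ {x | 0 < f x}) = 1 := by
    rw [← measure_univ (μ := μ)]
    refine measure_congr (Filter.eventuallyEq_set.mpr ?_)
    filter_upwards [hf0] with x hx
    simpa using hx.lt_or_gt
  have hdisj : Disjoint {x | f x < 0} {x | 0 < f x} :=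
    Set.disjoint_left.mpr fun _ h h' => lt_asymm (α := ℝ) h h'
  rw [measure_union hdisj hpos, hswap, ← two_mul] at hcover
  have hhalf : μ {x | f x < 0} = 1 / 2 :=
    (ENNReal.eq_div_iff two_ne_zero ENNReal.ofNat_ne_top).mpr hcover
  exact ⟨hhalf, hswap.trans hhalf⟩

theorem even_negRootCount_polyOfCoeffs_iff {n : ℕ} {ω : Fin (n + 1) → ℝ} (h0 : ω 0 ≠ 0)
    (hlast : ω (Fin.last n) ≠ 0) :
    Even (negRootCount (polyOfCoeffs ω)) ↔ 0 < (-1) ^ n * ω 0 * ω (Fin.last n) := by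
  have hdeg := natDegree_polyOfCoeffs hlast
  rw [even_negRootCount_iff (by simpa [coeff_polyOfCoeffs]), leadingCoeff, hdeg]
  simp [coeff_polyOfCoeffs, Fin.last]

/-- For a random real polynomial of degree `n ≥ 1` with i.i.d. standard normal
coefficients, `P(N⁻(Q)` is odd`) = 1/2` and `P(N⁻(Q)` is even`) = 1/2`. -/
theorem stmt_8 (n : ℕ) (hn : 1 ≤ n) :
    (Measure.pi fun _ : Fin (n + 1) => gaussianReal 0 1)
        {ω | Odd (negRootCount (polyOfCoeffs ω))} = 1 / 2
    ∧ (Measure.pi fun _ : Fin (n + 1) => gaussianReal 0 1)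
        {ω | Even (negRootCount (polyOfCoeffs ω))} = 1 / 2 := by
  have : NullSingletonClass (gaussianReal 0 1) := nullSingletonClass_gaussianReal one_ne_zero
  set μ := Measure.pi fun _ : Fin (n + 1) => gaussianReal 0 1
  set f : (Fin (n + 1) → ℝ) → ℝ := fun ω => (-1) ^ n * ω 0 * ω (Fin.last n)
  have hextreme : ∀ᵐ ω ∂μ, ω 0 ≠ 0 ∧ ω (Fin.last n) ≠ 0 := by
    filter_upwards [Measure.ae_eval_ne _ 0 0, Measure.ae_eval_ne _ (Fin.last n) 0]
      with ω h0 hlast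
    exact ⟨h0, hlast⟩
  have hf0 : ∀ᵐ ω ∂μ, f ω ≠ 0 := by
    filter_upwards [hextreme] with ω ⟨h0, hlast⟩
    simp [f, h0, hlast]
  have : NeZero n := ⟨by omega⟩
  have hflip : ∀ ω, f (Function.update ω 0 (-ω 0)) = -f ω := fun ω => by
    simp [f, Fin.last_pos'.ne']
  obtain ⟨hneg, hpos⟩ := measure_neg_eq_half_and_measure_pos_eq_half
    (measurePreserving_update_neg (by simp [gaussianReal_map_neg]) 0) (by fun_prop) hflip hf0
  refine ⟨(measure_congr ?_).trans hneg, (measure_congr ?_).trans hpos⟩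
  all_goals
    refine Filter.eventuallyEq_set.mpr ?_
    filter_upwards [hextreme, hf0] with ω ⟨h0, hlast⟩ hfω
    have hparity := even_negRootCount_polyOfCoeffs_iff h0 hlast
  · rw [← Nat.not_even_iff_odd, hparity]
    exact not_lt.trans hfω.le_iff_lt
  · exact hparity
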